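/- Let (X,*) be a topological group with identity x₀ whose topology is induced by a metric d, and suppose {T_α}_{α∈[0,∞)} is a dilation family on (X,d,x₀) consisting of group homomorphisms. If the family of left translations {ρ_c}_{c∈X}, ρ_c(x) = c*x, is equicontinuous with respect to d, then D(x,y) := sup{ d(c*x, c*y) : c ∈ X } is a well-defined left-translation-invariant metric on X inducing the same topology as d, and {T_α}_{α∈[0,∞)} is a dilation family on (X,D,x₀). -/

import Mathlib

/-!
Boundedness of `c ↦ d(c x, c y)` is where the dilations enter: writing `y = x g`, the homomorphism
`T α` rescales every distance `d(c x, c x g)` by `α` and turns it into `d(T α (c x), T α (c x) · T α g)`,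
where `T α g` is close to `1` for small `α`; equicontinuity at `1` then bounds all of these by `1`,
so `d(c x, c y) ≤ α⁻¹`. The supremum `D ≥ d` is left invariant by reindexing, equicontinuity gives
`D(x, y) → 0` as `y → x`, and a surjective homomorphism scaling `d` by `α` scales `D` by `α`.
-/

open Filter Topology Set

/-- A dilation family on `(X, d, x₀)` indexed by a multiplicatively closed
set `I ⊆ ℝ≥0`. -/
def IsDilationFamily {X : Type*} [MetricSpace X] (I : Set ℝ) (T : ℝ → X → X) (x₀ : X) : Prop :=
  I ⊆ Set.Ici 0 ∧
  (∀ α ∈ I, ∀ β ∈ I, α * β ∈ I) ∧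
  (∀ α ∈ I, ∀ x y : X, dist (T α x) (T α y) = α * dist x y) ∧
  (∀ α ∈ I, T α x₀ = x₀) ∧
  (∀ α ∈ I, ∀ β ∈ I, ∀ x : X, T α (T β x) = T (α * β) x) ∧
  (∀ x : X, ∃ L : X, Tendsto (fun α => T α x) (𝓝[I] 1) (𝓝 L))

/-- `D(x,y) = sup { d(c*x, c*y) : c ∈ X }`. -/
noncomputable def transDist {X : Type*} [Group X] [MetricSpace X] (x y : X) : ℝ :=
  ⨆ c : X, dist (c * x) (c * y)

namespace IsDilationFamily

variable {X : Type*} [MetricSpace X] {I : Set ℝ} {T : ℝ → X → X} {x₀ : X}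
  (hT : IsDilationFamily I T x₀)
include hT

theorem dist_apply {α : ℝ} (hα : α ∈ I) (x y : X) : dist (T α x) (T α y) = α * dist x y :=
  hT.2.2.1 α hα x y

theorem apply_base {α : ℝ} (hα : α ∈ I) : T α x₀ = x₀ :=
  hT.2.2.2.1 α hα

theorem apply_apply {α β : ℝ} (hα : α ∈ I) (hβ : β ∈ I) (x : X) : T α (T β x) = T (α * β) x :=
  hT.2.2.2.2.1 α hα β hβ x

theorem apply_zero (h0 : (0 : ℝ) ∈ I) (x : X) : T 0 x = x₀ := by
  simpa [hT.apply_base h0] using hT.dist_apply h0 x x₀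

theorem apply_one (h1 : (1 : ℝ) ∈ I) (x : X) : T 1 x = x := by
  have h := hT.apply_apply h1 h1 x
  rw [one_mul] at h
  have hdist := hT.dist_apply h1 (T 1 x) x
  rw [h, dist_self, one_mul] at hdist
  exact dist_eq_zero.1 hdist.symm

theorem surjective {α : ℝ} (hα : α ∈ I) (hα' : α⁻¹ ∈ I) (hα₀ : α ≠ 0) :
    Function.Surjective (T α) := fun x =>
  ⟨T α⁻¹ x, by
    rw [hT.apply_apply hα hα', mul_inv_cancel₀ hα₀,
      hT.apply_one (mul_inv_cancel₀ hα₀ ▸ hT.2.1 α hα α⁻¹ hα')]⟩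

/-- The limit in the definition of a dilation family is necessarily `x`, as `T 1 = id`. -/
theorem tendsto_nhds_self (h1 : (1 : ℝ) ∈ I) (x : X) :
    Tendsto (fun α => T α x) (𝓝[I] 1) (𝓝 x) := by
  obtain ⟨L, hL⟩ := hT.2.2.2.2.2 x
  have hL1 : Tendsto (fun α => T α x) (pure 1) (𝓝 L) :=
    hL.mono_left (le_inf (pure_le_nhds 1) (le_principal_iff.2 h1))
  rwa [tendsto_nhds_unique hL1 (tendsto_pure_nhds _ _), hT.apply_one h1] at hL

end IsDilationFamily

section transDist

variable {X : Type*} [Group X] [MetricSpace X]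

theorem transDist_nonneg (x y : X) : 0 ≤ transDist x y :=
  Real.iSup_nonneg fun _ => dist_nonneg

theorem transDist_comm (x y : X) : transDist x y = transDist y x := by
  simp only [transDist, dist_comm]

theorem transDist_self (x : X) : transDist x x = 0 := by
  simp [transDist]

theorem transDist_mul_left (z x y : X) : transDist (z * x) (z * y) = transDist x y := by
  simpa only [transDist, Equiv.coe_mulRight, mul_assoc] using
    (Equiv.mulRight z).iSup_comp (g := fun c => dist (c * x) (c * y))

theorem transDist_le {x y : X} {r : ℝ} (h : ∀ c : X, dist (c * x) (c * y) ≤ r) :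
    transDist x y ≤ r :=
  ciSup_le h

section Bounded

variable {x y : X} (hxy : BddAbove (range fun c : X => dist (c * x) (c * y)))
include hxy

theorem dist_mul_left_le_transDist (c : X) : dist (c * x) (c * y) ≤ transDist x y :=
  le_ciSup hxy c

theorem dist_le_transDist : dist x y ≤ transDist x y := by
  simpa using dist_mul_left_le_transDist hxy 1

theorem transDist_eq_zero_iff : transDist x y = 0 ↔ x = y := by
  refine ⟨fun h => dist_le_zero.1 (h ▸ dist_le_transDist hxy), ?_⟩
  rintro rfl
  exact transDist_self x

theorem transDist_triangle {z : X} (hyz : BddAbove (range fun c : X => dist (c * y) (c * z))) :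
    transDist x z ≤ transDist x y + transDist y z :=
  transDist_le fun c => (dist_triangle (c * x) (c * y) (c * z)).trans <|
    add_le_add (dist_mul_left_le_transDist hxy c) (dist_mul_left_le_transDist hyz c)

end Bounded

theorem eventually_transDist_lt {x : X} (hx : EquicontinuousAt (fun c : X => (c * ·)) x)
    {ε : ℝ} (hε : 0 < ε) : ∀ᶠ y in 𝓝 x, transDist x y < ε := by
  filter_upwards [Metric.equicontinuousAt_iff_right.1 hx (ε / 2) (half_pos hε)] with y hy
  exact (transDist_le fun c => (hy c).le).trans_lt (half_lt_self hε)

theorem isOpen_iff_transDist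
    (hb : ∀ x y : X, BddAbove (range fun c : X => dist (c * x) (c * y)))
    (he : Equicontinuous fun c : X => (c * ·)) (s : Set X) :
    IsOpen s ↔ ∀ x ∈ s, ∃ ε > 0, ∀ y, transDist x y < ε → y ∈ s := by
  constructor
  · intro hs x hx
    obtain ⟨ε, hε, hball⟩ := Metric.isOpen_iff.1 hs x hx
    refine ⟨ε, hε, fun y hy => hball ?_⟩
    rw [Metric.mem_ball, dist_comm]
    exact (dist_le_transDist (hb x y)).trans_lt hy
  · intro hs
    refine isOpen_iff_mem_nhds.2 fun x hx => ?_
    obtain ⟨ε, hε, hsub⟩ := hs x hx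
    exact mem_of_superset (eventually_transDist_lt (he x) hε) hsub

theorem transDist_map_of_dist_map {f : X → X} {α : ℝ} (hα : 0 ≤ α)
    (hf : Function.Surjective f) (hmul : ∀ x y, f (x * y) = f x * f y)
    (hdist : ∀ x y, dist (f x) (f y) = α * dist x y) (x y : X) :
    transDist (f x) (f y) = α * transDist x y := by
  rw [transDist, ← hf.iSup_comp, transDist, Real.mul_iSup_of_nonneg hα]
  simp only [← hmul, hdist]

theorem bddAbove_range_dist_mul_left {T : ℝ → X → X} (hT : IsDilationFamily (Ici 0) T 1)
    (hhom : ∀ α ∈ Ici (0 : ℝ), ∀ x y : X, T α (x * y) = T α x * T α y)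
    (he : EquicontinuousAt (fun c : X => (c * ·)) 1) (x y : X) :
    BddAbove (range fun c : X => dist (c * x) (c * y)) := by
  obtain ⟨δ, hδ, hsmall⟩ : ∃ δ > 0, ∀ g : X, dist g 1 < δ → ∀ c : X, dist c (c * g) < 1 := by
    simpa using Metric.eventually_nhds_iff.1 (Metric.equicontinuousAt_iff_right.1 he 1 one_pos)
  obtain ⟨α, hα, hαg⟩ := exists_pos_mul_lt hδ (dist (x⁻¹ * y) 1)
  have hαI : α ∈ Ici (0 : ℝ) := hα.le
  have hTg : dist (T α (x⁻¹ * y)) 1 < δ := by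
    rw [← hT.apply_base hαI, hT.dist_apply hαI, mul_comm]
    exact hαg
  refine ⟨α⁻¹, forall_mem_range.2 fun c => ?_⟩
  calc dist (c * x) (c * y) = α⁻¹ * dist (T α (c * x)) (T α (c * y)) := by
        rw [hT.dist_apply hαI, inv_mul_cancel_left₀ hα.ne']
    _ = α⁻¹ * dist (T α (c * x)) (T α (c * x) * T α (x⁻¹ * y)) := by
        rw [← hhom α hαI, mul_assoc, mul_inv_cancel_left]
    _ ≤ α⁻¹ * 1 := by gcongr; exact (hsmall _ hTg _).le
    _ = α⁻¹ := mul_one _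

end transDist

theorem stmt_18_general {X : Type*} [Group X] [MetricSpace X]
    (T : ℝ → X → X)
    (hT : IsDilationFamily (Set.Ici 0) T (1 : X))
    (hhom : ∀ α ∈ Set.Ici (0 : ℝ), ∀ x y : X, T α (x * y) = T α x * T α y)
    (hequi : ∀ x : X, ∀ ε > (0 : ℝ), ∃ δ > (0 : ℝ), ∀ y : X, dist x y < δ →
      ∀ c : X, dist (c * x) (c * y) < ε) :
    (∀ x y : X, BddAbove (Set.range fun c : X => dist (c * x) (c * y))) ∧
    (∀ x y : X, 0 ≤ transDist x y) ∧
    (∀ x y : X, transDist x y = transDist y x) ∧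
    (∀ x y : X, transDist x y = 0 ↔ x = y) ∧
    (∀ x y z : X, transDist x z ≤ transDist x y + transDist y z) ∧
    (∀ z x y : X, transDist (z * x) (z * y) = transDist x y) ∧
    (∀ s : Set X, IsOpen s ↔ ∀ x ∈ s, ∃ ε > (0 : ℝ), ∀ y, transDist x y < ε → y ∈ s) ∧
    (∀ α ∈ Set.Ici (0 : ℝ), ∀ x y : X, transDist (T α x) (T α y) = α * transDist x y) ∧
    (∀ x : X, Tendsto (fun α => T α x) (𝓝[Set.Ici (0 : ℝ)] 1) (𝓝 x)) := by
  have he : Equicontinuous fun c : X => (c * ·) := fun x =>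
    Metric.equicontinuousAt_iff.2 fun ε hε => by
      simpa only [dist_comm] using hequi x ε hε
  have hb := bddAbove_range_dist_mul_left hT hhom (he 1)
  refine ⟨hb, transDist_nonneg, transDist_comm, fun x y => transDist_eq_zero_iff (hb x y),
    fun x y z => transDist_triangle (hb x y) (hb y z), transDist_mul_left,
    isOpen_iff_transDist hb he, ?_, hT.tendsto_nhds_self (mem_Ici.2 zero_le_one)⟩
  rintro α (hα : 0 ≤ α) x y
  rcases hα.eq_or_lt with rfl | hα
  · rw [hT.apply_zero self_mem_Ici, hT.apply_zero self_mem_Ici, transDist_self, zero_mul]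
  · exact transDist_map_of_dist_map hα.le (hT.surjective hα.le (inv_nonneg.2 hα.le) hα.ne')
      (hhom α hα.le) (hT.dist_apply hα.le) x y

/-- For a metrizable topological group with a dilation family of group homomorphisms about
the identity and equicontinuous left translations, `D(x,y) = sup_c d(c*x, c*y)` is a
well-defined left-invariant metric inducing the same topology, with respect to which the
family is again a dilation family. -/
theorem stmt_18 {X : Type*} [Group X] [MetricSpace X] [IsTopologicalGroup X]
    (T : ℝ → X → X)
    (hT : IsDilationFamily (Set.Ici 0) T (1 : X))
    (hhom : ∀ α ∈ Set.Ici (0 : ℝ), ∀ x y : X, T α (x * y) = T α x * T α y)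
    (hequi : ∀ x : X, ∀ ε > (0 : ℝ), ∃ δ > (0 : ℝ), ∀ y : X, dist x y < δ →
      ∀ c : X, dist (c * x) (c * y) < ε) :
    (∀ x y : X, BddAbove (Set.range fun c : X => dist (c * x) (c * y))) ∧
    (∀ x y : X, 0 ≤ transDist x y) ∧
    (∀ x y : X, transDist x y = transDist y x) ∧
    (∀ x y : X, transDist x y = 0 ↔ x = y) ∧
    (∀ x y z : X, transDist x z ≤ transDist x y + transDist y z) ∧
    (∀ z x y : X, transDist (z * x) (z * y) = transDist x y) ∧
    (∀ s : Set X, IsOpen s ↔ ∀ x ∈ s, ∃ ε > (0 : ℝ), ∀ y, transDist x y < ε → y ∈ s) ∧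
    (∀ α ∈ Set.Ici (0 : ℝ), ∀ x y : X, transDist (T α x) (T α y) = α * transDist x y) ∧
    (∀ x : X, Tendsto (fun α => T α x) (𝓝[Set.Ici (0 : ℝ)] 1) (𝓝 x)) :=
  stmt_18_general T hT hhom hequi
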